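/- The spread of the ratios is controlled: (n − 2) · (min_{i ≠ j} v̂_i A_{i,j} v̂_j) · (max_i u_i − min_i u_i) ≤ 4ε · max_i u_i; consequently 1 − (min_i u_i)/(max_i u_i) ≤ min{ 1 , 4ε / ((n − 2) · min_{i ≠ j} v̂_i A_{i,j} v̂_j) }. -/

import Mathlib

/-!
Put `B i j = v̂ i * A i j * v̂ j`, so that `u i * ∑ j, B i j * u j = 1` and every row sum of `B`
lies within `ε` of `1`. Let `u` be largest at `a` and smallest at `b`. Each of the `n - 2` or more
indices `j ∉ {a, b}` has weight at least `M` in both rows `a` and `b`, so it pulls the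
weighted sum `∑ j, B b j * u j = 1 / min u` below `(1 + ε) max u` by `M (max u - u j)` and
pushes `∑ j, B a j * u j = 1 / max u` above `(1 - ε) min u` by `M (u j - min u)`. Subtracting,
`(n - 2) M (max u - min u) ≤ (1 + ε) max u - (1 - ε) min u - (1 / min u - 1 / max u)`, and the
last bracket is at least `(1 - ε) (max u - min u)` because `min u * max u * (1 - ε) ≤ 1`.
This gives the bound `2 ε max u`.
-/

open Finset

lemma sum_mul_add_mul_sum_sub_le {ι : Type*} [Fintype ι] (S : Finset ι) {w f : ι → ℝ}
    {M U : ℝ} (hw : ∀ j, 0 ≤ w j) (hMw : ∀ j ∈ S, M ≤ w j) (hfU : ∀ j, f j ≤ U) :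
    ∑ j, w j * f j + M * ∑ j ∈ S, (U - f j) ≤ U * ∑ j, w j := by
  have hS : M * ∑ j ∈ S, (U - f j) ≤ ∑ j, w j * (U - f j) := by
    rw [mul_sum]
    calc ∑ j ∈ S, M * (U - f j) ≤ ∑ j ∈ S, w j * (U - f j) :=
          sum_le_sum fun j hj => mul_le_mul_of_nonneg_right (hMw j hj) (sub_nonneg.2 (hfU j))
      _ ≤ ∑ j, w j * (U - f j) :=
          sum_le_sum_of_subset_of_nonneg (subset_univ S) fun j _ _ =>
            mul_nonneg (hw j) (sub_nonneg.2 (hfU j))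
  have hsplit : ∑ j, w j * (U - f j) = U * ∑ j, w j - ∑ j, w j * f j := by
    rw [mul_sum, ← sum_sub_distrib]
    exact sum_congr rfl fun j _ => by ring
  linarith

lemma mul_sum_add_mul_sum_sub_le {ι : Type*} [Fintype ι] (S : Finset ι) {w f : ι → ℝ}
    {M m : ℝ} (hw : ∀ j, 0 ≤ w j) (hMw : ∀ j ∈ S, M ≤ w j) (hmf : ∀ j, m ≤ f j) :
    m * ∑ j, w j + M * ∑ j ∈ S, (f j - m) ≤ ∑ j, w j * f j := by
  have h := sum_mul_add_mul_sum_sub_le S (f := fun j => -f j) hw hMw fun j => neg_le_neg (hmf j)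
  simp only [mul_neg, sum_neg_distrib, neg_sub_neg, neg_mul] at h
  linarith

theorem card_sub_two_mul_mul_sub_le {ι : Type*} [Fintype ι] [DecidableEq ι]
    {B : ι → ι → ℝ} {u : ι → ℝ} {ε M : ℝ} (hB : ∀ i j, 0 ≤ B i j)
    (hBM : ∀ i j, i ≠ j → M ≤ B i j) (hM : 0 ≤ M) (hrow : ∀ i, |∑ j, B i j - 1| ≤ ε)
    (hu : ∀ i, 0 < u i) (hscale : ∀ i, ∑ j, B i j * u j = (u i)⁻¹) {a b : ι}
    (ha : ∀ j, u j ≤ u a) (hb : ∀ j, u b ≤ u j) :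
    ((Fintype.card ι : ℝ) - 2) * M * (u a - u b) ≤ 2 * ε * u a := by
  set S := univ \ {a, b}
  have hcard : (Fintype.card ι : ℝ) - 2 ≤ #S := by
    have h := (card_le_card_sdiff_add_card (s := univ) (t := {a, b})).trans
      (Nat.add_le_add_left card_le_two _)
    rw [card_univ] at h
    have : (Fintype.card ι : ℝ) ≤ #S + 2 := by exact_mod_cast h
    linarith
  have hmemS : ∀ j ∈ S, a ≠ j ∧ b ≠ j := fun j hj => by
    simp only [S, mem_sdiff, mem_insert, mem_singleton, not_or] at hj
    exact ⟨Ne.symm hj.2.1, Ne.symm hj.2.2⟩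
  have hupper := sum_mul_add_mul_sum_sub_le S (hB b) (fun j hj => hBM b j (hmemS j hj).2) ha
  have hlower := mul_sum_add_mul_sum_sub_le S (hB a) (fun j hj => hBM a j (hmemS j hj).1) hb
  rw [hscale] at hupper hlower
  have hrow_b : u a * ∑ j, B b j ≤ u a * (1 + ε) :=
    mul_le_mul_of_nonneg_left (by linarith [(abs_le.1 (hrow b)).2]) (hu a).le
  have hrow_a : u b * (1 - ε) ≤ u b * ∑ j, B a j :=
    mul_le_mul_of_nonneg_left (by linarith [(abs_le.1 (hrow a)).1]) (hu b).le
  have hsum_S : M * ∑ j ∈ S, (u a - u j) + M * ∑ j ∈ S, (u j - u b)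
      = #S * M * (u a - u b) := by
    rw [← mul_add, ← sum_add_distrib, sum_congr rfl fun j _ => sub_add_sub_cancel (u a) (u j) (u b),
      sum_const, nsmul_eq_mul]
    ring
  have hcard_M : ((Fintype.card ι : ℝ) - 2) * M * (u a - u b) ≤ #S * M * (u a - u b) :=
    mul_le_mul_of_nonneg_right (mul_le_mul_of_nonneg_right hcard hM) (sub_nonneg.2 (hb a))
  have hprod : u b * (1 - ε) * u a ≤ 1 := by
    have : 0 ≤ M * ∑ j ∈ S, (u j - u b) :=
      mul_nonneg hM (sum_nonneg fun j _ => sub_nonneg.2 (hb j))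
    have := mul_le_mul_of_nonneg_right (show u b * (1 - ε) ≤ (u a)⁻¹ by linarith) (hu a).le
    rwa [inv_mul_cancel₀ (hu a).ne'] at this
  have hinv : (1 - ε) * (u a - u b) ≤ (u b)⁻¹ - (u a)⁻¹ := by
    rw [inv_sub_inv (hu b).ne' (hu a).ne', le_div_iff₀ (mul_pos (hu b) (hu a))]
    nlinarith [mul_le_mul_of_nonneg_right hprod (sub_nonneg.2 (hb a))]
  linarith

lemma sum_mul_div_eq_inv_div {ι : Type*} [Fintype ι] {A : ι → ι → ℝ} {v w : ι → ℝ}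
    (hw : ∀ i, w i ≠ 0) (hds : ∀ i, ∑ j, v i * A i j * v j = 1) (i : ι) :
    ∑ j, w i * A i j * w j * (v j / w j) = (v i / w i)⁻¹ := by
  refine eq_inv_of_mul_eq_one_left ?_
  rw [sum_mul, ← hds i]
  exact sum_congr rfl fun j _ => by field_simp [hw i, hw j]

lemma one_sub_div_le_div_of_mul_sub_le {m U c d : ℝ} (hU : 0 < U) (hc : 0 < c)
    (h : c * (U - m) ≤ d * U) : 1 - m / U ≤ d / c := by
  rw [one_sub_div hU.ne', div_le_div_iff₀ hU hc]
  linarith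

/-- Spread control of the ratios `u i = v i / v̂ i`:
`(n − 2) · (min_{i ≠ j} v̂_i A_{i,j} v̂_j) · (max u − min u) ≤ 4ε · max u`, and hence
`1 − (min u)/(max u) ≤ min { 1 , 4ε / ((n − 2) · min_{i ≠ j} v̂_i A_{i,j} v̂_j) }`. -/
theorem ratio_spread_bound
    {n : ℕ} (hn : 3 ≤ n)
    (A : Fin n → Fin n → ℝ)
    (hA_nonneg : ∀ i j, 0 ≤ A i j)
    (hA_offdiag : ∀ i j, i ≠ j → 0 < A i j)
    (v : Fin n → ℝ) (hv : ∀ i, 0 < v i)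
    (hds : ∀ i, ∑ j, v i * A i j * v j = 1)
    (ε : ℝ) (hε0 : 0 < ε)
    (vh : Fin n → ℝ) (hvh : ∀ i, 0 < vh i)
    (happrox : ∀ i, |∑ j, vh i * A i j * vh j - 1| ≤ ε)
    (M : ℝ)
    (hM : M = Finset.inf' (Finset.univ.filter (fun p : Fin n × Fin n => p.1 ≠ p.2))
        ⟨(⟨0, by omega⟩, ⟨1, by omega⟩), by
          simp only [Finset.mem_filter, Finset.mem_univ, true_and]
          exact Fin.ne_of_val_ne (by simp)⟩
        (fun p => vh p.1 * A p.1 p.2 * vh p.2))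
    (umin umax : ℝ)
    (humin : umin = Finset.inf' Finset.univ ⟨⟨0, by omega⟩, Finset.mem_univ _⟩
        (fun i => v i / vh i))
    (humax : umax = Finset.sup' Finset.univ ⟨⟨0, by omega⟩, Finset.mem_univ _⟩
        (fun i => v i / vh i)) :
    ((n : ℝ) - 2) * M * (umax - umin) ≤ 4 * ε * umax ∧
      1 - umin / umax ≤ min 1 (4 * ε / (((n : ℝ) - 2) * M)) := by
  have hu : ∀ i, 0 < v i / vh i := fun i => div_pos (hv i) (hvh i)
  have hBM : ∀ i j, i ≠ j → M ≤ vh i * A i j * vh j := fun i j hij =>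
    hM ▸ inf'_le (fun p : Fin n × Fin n => vh p.1 * A p.1 p.2 * vh p.2) (b := (i, j))
      (mem_filter.2 ⟨mem_univ _, hij⟩)
  have hM_pos : 0 < M := hM ▸ (lt_inf'_iff _).2 fun p hp =>
    mul_pos (mul_pos (hvh _) (hA_offdiag _ _ (mem_filter.1 hp).2)) (hvh _)
  have : NeZero n := ⟨by omega⟩
  obtain ⟨a, -, ha⟩ := exists_mem_eq_sup' univ_nonempty fun i => v i / vh i
  obtain ⟨b, -, hb⟩ := exists_mem_eq_inf' univ_nonempty fun i => v i / vh i
  rw [← humax] at ha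
  rw [← humin] at hb
  have hspread := card_sub_two_mul_mul_sub_le
    (fun i j => mul_nonneg (mul_nonneg (hvh i).le (hA_nonneg i j)) (hvh j).le) hBM hM_pos.le
    happrox hu (sum_mul_div_eq_inv_div (fun i => (hvh i).ne') hds) (a := a) (b := b)
    (fun j => ha ▸ humax ▸ le_sup' (fun i => v i / vh i) (mem_univ j))
    (fun j => hb ▸ humin ▸ inf'_le (fun i => v i / vh i) (mem_univ j))
  rw [Fintype.card_fin, ← ha, ← hb] at hspread
  have humax_pos : 0 < umax := ha ▸ hu a
  have hbound : ((n : ℝ) - 2) * M * (umax - umin) ≤ 4 * ε * umax := by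
    linarith [mul_pos hε0 humax_pos]
  have hn2 : (0 : ℝ) < n - 2 := by
    have : (3 : ℝ) ≤ n := by exact_mod_cast hn
    linarith
  refine ⟨hbound, le_min ?_ (one_sub_div_le_div_of_mul_sub_le humax_pos (mul_pos hn2 hM_pos) hbound)⟩
  linarith [div_pos (hb ▸ hu b) humax_pos]
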